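/- Gâteaux derivative of the discrete cost functional: Let U, Ū ∈ (ℝ^m)^{N+1}, and let Q̄ ∈ (ℝ^d)^{N+1} be the unique sequence with Q̄_0 = 0 and (ᶜΔ^α_− Q̄)_k = ∂f/∂x(Q^{U}_k, U_k, t_k) Q̄_k + ∂f/∂v(Q^{U}_k, U_k, t_k) Ū_k for k = 1,…,N. Then the limit DL^α_h(U)(Ū) = lim_{ε→0} (L^α_h(U+εŪ) − L^α_h(U))/ε exists and equals h ∑_{k=1}^{N} [ ∂L/∂x(Q^{U}_k, U_k, t_k) · Q̄_k + ∂L/∂v(Q^{U}_k, U_k, t_k) · Ū_k ]. -/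

import Mathlib

open Finset Filter
open scoped RealInnerProductSpace Topology

noncomputable section

/-- `ℝ^n` with the euclidean norm. -/
abbrev Euc (n : ℕ) : Type := EuclideanSpace ℝ (Fin n)

/-- The Grünwald–Letnikov coefficients `α_r = (−α)(1−α)⋯(r−1−α)/r!`, with `α_0 = 1`. -/
def glCoef (α : ℝ) (r : ℕ) : ℝ :=
  (∏ i ∈ Finset.range r, ((i : ℝ) - α)) / (Nat.factorial r : ℝ)

/-- Left discrete fractional derivative `(Δ^α_− G)_k = h^{−α} ∑_{r=0}^{k} α_r G_{k−r}`. -/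
def dMinus {n : ℕ} (α h : ℝ) (G : ℕ → Euc n) (k : ℕ) : Euc n :=
  (h ^ (-α)) • ∑ r ∈ Finset.range (k + 1), glCoef α r • G (k - r)

/-- Right discrete fractional derivative `(Δ^α_+ G)_k = h^{−α} ∑_{r=0}^{N−k} α_r G_{k+r}`. -/
def dPlus {n : ℕ} (N : ℕ) (α h : ℝ) (G : ℕ → Euc n) (k : ℕ) : Euc n :=
  (h ^ (-α)) • ∑ r ∈ Finset.range (N - k + 1), glCoef α r • G (k + r)

/-- Left Caputo discrete fractional derivative `(ᶜΔ^α_− G)_k = h^{−α} ∑_{r=0}^{k} α_r (G_{k−r} − G_0)`. -/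
def cdMinus {n : ℕ} (α h : ℝ) (G : ℕ → Euc n) (k : ℕ) : Euc n :=
  dMinus α h (fun j => G j - G 0) k

/-- Right Caputo discrete fractional derivative
`(ᶜΔ^α_+ G)_k = h^{−α} ∑_{r=0}^{N−k} α_r (G_{k+r} − G_N)`. -/
def cdPlus {n : ℕ} (N : ℕ) (α h : ℝ) (G : ℕ → Euc n) (k : ℕ) : Euc n :=
  dPlus N α h (fun j => G j - G N) k

/-! The perturbed state `Q^{U+εŪ}` satisfies an implicit scheme whose unknown `Q_k` appears on both
sides with coefficient `α_0 = 1` on the left and through the Lipschitz map `h^α f` on the right.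
Subtracting the scheme for `Q^U` and `ε` times the linearised scheme, the error
`e_k(ε) = Q^{U+εŪ}_k − Q^U_k − ε Q̄_k` satisfies `‖e_k‖ ≤ h^α M ‖e_k‖ + (earlier errors) + o(ε)`,
and since `h^α M < 1` the error is absorbed into the left-hand side; strong induction on `k`
gives `e_k = o(ε)`, i.e. `Q̄` is the derivative of the state. The chain rule then differentiates
the finite sum defining the cost. -/

theorem hasDerivAt_const_add_smul {E : Type*} [NormedAddCommGroup E] [NormedSpace ℝ E]
    (x v : E) (s : ℝ) : HasDerivAt (fun ε : ℝ => x + ε • v) v s := by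
  simpa using ((hasDerivAt_id s).smul_const v).const_add x

section TwoArguments

variable {E₁ E₂ F : Type*} [NormedAddCommGroup E₁] [NormedSpace ℝ E₁] [NormedAddCommGroup E₂]
  [NormedSpace ℝ E₂] [NormedAddCommGroup F] [NormedSpace ℝ F]

theorem DifferentiableAt.hasDerivAt_comp₂ {g : E₁ → E₂ → F} {X : ℝ → E₁} {W : ℝ → E₂}
    {X' : E₁} {W' : E₂} {s : ℝ}
    (hg : DifferentiableAt ℝ (fun p : E₁ × E₂ => g p.1 p.2) (X s, W s))
    (hX : HasDerivAt X X' s) (hW : HasDerivAt W W' s) :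
    HasDerivAt (fun ε => g (X ε) (W ε))
      (fderiv ℝ (fun x => g x (W s)) (X s) X' + fderiv ℝ (fun w => g (X s) w) (W s) W') s := by
  have hD := hg.hasFDerivAt
  set D := fderiv ℝ (fun p : E₁ × E₂ => g p.1 p.2) (X s, W s)
  have hfst : fderiv ℝ (fun x => g x (W s)) (X s) = D ∘L .inl ℝ E₁ E₂ :=
    (hD.comp (f := fun x => (x, W s)) (X s) (hasFDerivAt_prodMk_left _ _)).fderiv
  have hsnd : fderiv ℝ (fun w => g (X s) w) (W s) = D ∘L .inr ℝ E₁ E₂ :=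
    (hD.comp (f := fun w => (X s, w)) (W s) (hasFDerivAt_prodMk_right _ _)).fderiv
  rw [hfst, hsnd, D.comp_inl_add_comp_inr (X', W')]
  exact hD.comp_hasDerivAt s (hX.prodMk hW)

theorem ContDiff.differentiable_uncurry_slice {n : WithTop ℕ∞} {f : E₁ → E₂ → ℝ → F}
    (hf : ContDiff ℝ n fun p : E₁ × E₂ × ℝ => f p.1 p.2.1 p.2.2) (hn : n ≠ 0) (t : ℝ) :
    Differentiable ℝ fun p : E₁ × E₂ => f p.1 p.2 t :=
  (hf.differentiable hn).comp (differentiable_fst.prodMk (differentiable_snd.prodMk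
    (differentiable_const t)))

end TwoArguments

theorem Asymptotics.isLittleO_of_norm_le_mul_norm_add {ι E : Type*} [SeminormedAddCommGroup E]
    {l : Filter ι} {u : ι → E} {v φ : ι → ℝ} {c : ℝ} (hc : c < 1)
    (hu : ∀ i, ‖u i‖ ≤ c * ‖u i‖ + v i) (hv : v =o[l] φ) : u =o[l] φ := by
  refine (Asymptotics.IsBigO.of_bound (1 - c)⁻¹ (Eventually.of_forall fun i => ?_)).trans_isLittleO
    hv
  rw [le_inv_mul_iff₀ (sub_pos.2 hc)]
  nlinarith [hu i, Real.le_norm_self (v i)]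

theorem glCoef_zero (α : ℝ) : glCoef α 0 = 1 := by
  simp [glCoef]

theorem cdMinus_sub {n : ℕ} (α h : ℝ) (G H : ℕ → Euc n) (k : ℕ) :
    cdMinus α h (fun j => G j - H j) k = cdMinus α h G k - cdMinus α h H k := by
  simp only [cdMinus, dMinus, ← smul_sub, ← sum_sub_distrib]
  congr 1
  refine sum_congr rfl fun r _ => ?_
  module

theorem cdMinus_smul {n : ℕ} (α h c : ℝ) (G : ℕ → Euc n) (k : ℕ) :
    cdMinus α h (fun j => c • G j) k = c • cdMinus α h G k := by
  simp only [cdMinus, dMinus, smul_sum, ← smul_sub]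
  refine sum_congr rfl fun r _ => ?_
  module

theorem eq_rpow_smul_cdMinus_sub_sum {n : ℕ} {α h : ℝ} (hh : 0 < h) {G : ℕ → Euc n}
    (hG : G 0 = 0) (k : ℕ) :
    G k = h ^ α • cdMinus α h G k - ∑ r ∈ range k, glCoef α (r + 1) • G (k - (r + 1)) := by
  have hinv : h ^ α * h ^ (-α) = 1 := by rw [← Real.rpow_add hh]; simp
  simp only [cdMinus, dMinus, hG, sub_zero, smul_smul, hinv, one_smul, sum_range_succ',
    glCoef_zero, Nat.sub_zero]
  abel

theorem isLittleO_of_norm_cdMinus_le {ι : Type*} {l : Filter ι} {φ : ι → ℝ} {n N : ℕ}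
    {α h M : ℝ} (hh : 0 < h) (hM : h ^ α * M < 1) {e : ι → ℕ → Euc n} {g : ℕ → ι → ℝ}
    (he0 : ∀ i, e i 0 = 0)
    (he : ∀ k, 1 ≤ k → k ≤ N → ∀ i, ‖cdMinus α h (e i) k‖ ≤ M * ‖e i k‖ + g k i)
    (hg : ∀ k, 1 ≤ k → k ≤ N → g k =o[l] φ) :
    ∀ k ≤ N, (fun i => e i k) =o[l] φ := by
  intro k
  induction k using Nat.strong_induction_on with
  | _ k ih =>
    intro hkN
    rcases Nat.eq_zero_or_pos k with rfl | hk
    · simpa only [he0] using Asymptotics.isLittleO_zero φ l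
    set S : ι → Euc n := fun i => ∑ r ∈ range k, glCoef α (r + 1) • e i (k - (r + 1))
    have hS : S =o[l] φ := Asymptotics.IsLittleO.fun_sum fun r _ =>
      (ih (k - (r + 1)) (by omega) (by omega)).const_smul_left (glCoef α (r + 1))
    refine Asymptotics.isLittleO_of_norm_le_mul_norm_add hM (fun i => ?_)
      (((hg k hk hkN).const_mul_left (h ^ α)).add hS.norm_left)
    have hPpos : 0 < h ^ α := Real.rpow_pos_of_pos hh α
    calc ‖e i k‖ = ‖h ^ α • cdMinus α h (e i) k - S i‖ := by
          rw [← eq_rpow_smul_cdMinus_sub_sum hh (he0 i)]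
      _ ≤ h ^ α * ‖cdMinus α h (e i) k‖ + ‖S i‖ := by
          grw [norm_sub_le, norm_smul, Real.norm_of_nonneg hPpos.le]
      _ ≤ h ^ α * (M * ‖e i k‖ + g k i) + ‖S i‖ := by grw [he k hk hkN i]
      _ = h ^ α * M * ‖e i k‖ + (h ^ α * g k i + ‖S i‖) := by ring

theorem add_nat_mul_div_mem_Icc {a b : ℝ} (hab : a ≤ b) {k N : ℕ} (hk : k ≤ N) :
    a + k * ((b - a) / N) ∈ Set.Icc a b := by
  rcases N.eq_zero_or_pos with rfl | hN
  · simp [Nat.le_zero.1 hk, hab]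
  have hkN : (k : ℝ) * ((b - a) / N) ≤ N * ((b - a) / N) := by gcongr
  rw [mul_div_cancel₀ _ (by positivity)] at hkN
  constructor <;> nlinarith [div_nonneg (sub_nonneg.2 hab) (Nat.cast_nonneg (α := ℝ) N)]

theorem hasDerivAt_discrete_state {E : Type*} [NormedAddCommGroup E] [NormedSpace ℝ E]
    {d N : ℕ} {α h M : ℝ} (hh : 0 < h) (hM : h ^ α * M < 1) {f : Euc d → E → ℝ → Euc d}
    (hf : ∀ s, Differentiable ℝ fun p : Euc d × E => f p.1 p.2 s) {t : ℕ → ℝ}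
    (hLip : ∀ k, 1 ≤ k → k ≤ N → ∀ x₁ x₂ v, ‖f x₁ v (t k) - f x₂ v (t k)‖ ≤ M * ‖x₁ - x₂‖)
    {U Ubar : ℕ → E} {Q : ℝ → ℕ → Euc d} (hQ0 : ∀ ε, Q ε 0 = Q 0 0)
    (hQ : ∀ ε k, 1 ≤ k → k ≤ N → cdMinus α h (Q ε) k = f (Q ε k) (U k + ε • Ubar k) (t k))
    {Qbar : ℕ → Euc d} (hQbar0 : Qbar 0 = 0)
    (hQbar : ∀ k, 1 ≤ k → k ≤ N → cdMinus α h Qbar k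
      = fderiv ℝ (fun x => f x (U k) (t k)) (Q 0 k) (Qbar k)
        + fderiv ℝ (fun v => f (Q 0 k) v (t k)) (U k) (Ubar k)) :
    ∀ k ≤ N, HasDerivAt (fun ε => Q ε k) (Qbar k) 0 := by
  set e : ℝ → ℕ → Euc d := fun ε j => Q ε j - Q 0 j - ε • Qbar j
  set D : ℕ → Euc d := fun k => fderiv ℝ (fun x => f x (U k) (t k)) (Q 0 k) (Qbar k)
    + fderiv ℝ (fun v => f (Q 0 k) v (t k)) (U k) (Ubar k)
  set g : ℕ → ℝ → ℝ := fun k ε => ‖f (Q 0 k + ε • Qbar k) (U k + ε • Ubar k) (t k)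
    - f (Q 0 k) (U k) (t k) - ε • D k‖
  have hg : ∀ k, g k =o[𝓝 0] fun ε => ε := fun k => by
    have hline := DifferentiableAt.hasDerivAt_comp₂ (g := fun x v => f x v (t k)) (hf (t k) _)
      (hasDerivAt_const_add_smul (Q 0 k) (Qbar k) 0) (hasDerivAt_const_add_smul (U k) (Ubar k) 0)
    simp only [zero_smul, add_zero] at hline
    simpa [g, D, smul_add] using (hasDerivAt_iff_isLittleO.mp hline).norm_left
  have he : ∀ k, 1 ≤ k → k ≤ N → ∀ ε, ‖cdMinus α h (e ε) k‖ ≤ M * ‖e ε k‖ + g k ε := by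
    intro k hk hkN ε
    have hsplit : cdMinus α h (e ε) k
        = (f (Q ε k) (U k + ε • Ubar k) (t k) - f (Q 0 k + ε • Qbar k) (U k + ε • Ubar k) (t k))
          + (f (Q 0 k + ε • Qbar k) (U k + ε • Ubar k) (t k) - f (Q 0 k) (U k) (t k)
            - ε • D k) := by
      have hQU := hQ 0 k hk hkN
      simp only [zero_smul, add_zero] at hQU
      rw [cdMinus_sub, cdMinus_sub, cdMinus_smul, hQ ε k hk hkN, hQU, hQbar k hk hkN]
      abel
    have hdiff : Q ε k - (Q 0 k + ε • Qbar k) = e ε k := by simp only [e]; abel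
    rw [hsplit]
    grw [norm_add_le, hLip k hk hkN, hdiff]
  have herr := isLittleO_of_norm_cdMinus_le hh hM (e := e)
    (fun ε => by simp [e, hQ0 ε, hQbar0]) he (fun k _ _ => hg k)
  intro k hk
  rw [hasDerivAt_iff_isLittleO]
  simpa using herr k hk

theorem gateaux_derivative_discrete_cost_general
    (d m N : ℕ) (hN : 1 ≤ N)
    (a b : ℝ) (hab : a < b) (α : ℝ)
    (A : Euc d)
    (f : Euc d → Euc m → ℝ → Euc d)
    (hf : ContDiff ℝ 2 fun p : Euc d × Euc m × ℝ => f p.1 p.2.1 p.2.2)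
    (L : Euc d → Euc m → ℝ → ℝ)
    (hL : ContDiff ℝ 2 fun p : Euc d × Euc m × ℝ => L p.1 p.2.1 p.2.2)
    (M : ℝ)
    (hLip : ∀ (x₁ x₂ : Euc d) (v : Euc m), ∀ t ∈ Set.Icc a b,
      ‖f x₁ v t - f x₂ v t‖ ≤ M * ‖x₁ - x₂‖)
    (hMsmall : 2 * ((b - a) / (N : ℝ)) ^ α * M < 1)
    -- `SQ V` is the discrete state variable associated to the discrete control `V`
    (SQ : (ℕ → Euc m) → ℕ → Euc d)
    (hSQ : ∀ V : ℕ → Euc m, SQ V 0 = A ∧ ∀ k, 1 ≤ k → k ≤ N →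
      cdMinus α ((b - a) / (N : ℝ)) (SQ V) k
        = f (SQ V k) (V k) (a + (k : ℝ) * ((b - a) / (N : ℝ))))
    (U Ubar : ℕ → Euc m)
    -- `Qbar` is the solution of the linearised discrete fractional Cauchy problem
    (Qbar : ℕ → Euc d) (hQbar0 : Qbar 0 = 0)
    (hQbar : ∀ k, 1 ≤ k → k ≤ N →
      cdMinus α ((b - a) / (N : ℝ)) Qbar k
        = (fderiv ℝ (fun x => f x (U k) (a + (k : ℝ) * ((b - a) / (N : ℝ)))) (SQ U k)) (Qbar k)
          + (fderiv ℝ (fun v => f (SQ U k) v (a + (k : ℝ) * ((b - a) / (N : ℝ)))) (U k)) (Ubar k)) :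
    Filter.Tendsto
      (fun ε : ℝ =>
        ((((b - a) / (N : ℝ)) * ∑ k ∈ Finset.Icc 1 N,
            L (SQ (fun j => U j + ε • Ubar j) k) (U k + ε • Ubar k)
              (a + (k : ℝ) * ((b - a) / (N : ℝ)))) -
          ((b - a) / (N : ℝ)) * ∑ k ∈ Finset.Icc 1 N,
            L (SQ U k) (U k) (a + (k : ℝ) * ((b - a) / (N : ℝ)))) / ε)
      (𝓝[≠] (0 : ℝ))
      (𝓝 (((b - a) / (N : ℝ)) * ∑ k ∈ Finset.Icc 1 N,
        ((fderiv ℝ (fun x => L x (U k) (a + (k : ℝ) * ((b - a) / (N : ℝ)))) (SQ U k)) (Qbar k)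
          + (fderiv ℝ (fun v => L (SQ U k) v (a + (k : ℝ) * ((b - a) / (N : ℝ)))) (U k)) (Ubar k)))) := by
  have hh : 0 < (b - a) / N := div_pos (sub_pos.2 hab) (Nat.cast_pos.2 hN)
  have hstate := hasDerivAt_discrete_state hh (by linarith)
    (hf.differentiable_uncurry_slice two_ne_zero)
    (fun k _ hkN x₁ x₂ v => hLip x₁ x₂ v _ (add_nat_mul_div_mem_Icc hab.le hkN))
    (Q := fun ε => SQ (fun j => U j + ε • Ubar j)) (fun ε => (hSQ _).1.trans (hSQ _).1.symm)
    (fun ε => (hSQ _).2) hQbar0 (by simpa using hQbar)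
  have hcost : HasDerivAt (fun ε : ℝ => (b - a) / N * ∑ k ∈ Icc 1 N,
        L (SQ (fun j => U j + ε • Ubar j) k) (U k + ε • Ubar k) (a + k * ((b - a) / N)))
      ((b - a) / N * ∑ k ∈ Icc 1 N,
        (fderiv ℝ (fun x => L x (U k) (a + k * ((b - a) / N))) (SQ U k) (Qbar k)
          + fderiv ℝ (fun v => L (SQ U k) v (a + k * ((b - a) / N))) (U k) (Ubar k))) 0 := by
    refine (HasDerivAt.fun_sum fun k hk => ?_).const_mul _
    simpa using DifferentiableAt.hasDerivAt_comp₂ (g := fun x v => L x v (a + k * ((b - a) / N)))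
      (hL.differentiable_uncurry_slice two_ne_zero _ _) (hstate k (mem_Icc.1 hk).2)
      (hasDerivAt_const_add_smul (U k) (Ubar k) 0)
  rw [hasDerivAt_iff_tendsto_slope] at hcost
  refine hcost.congr fun ε => ?_
  simp [slope_def_field]

/-- **Gâteaux derivative of the discrete cost functional.** -/
theorem gateaux_derivative_discrete_cost
    (d m N : ℕ) (hd : 1 ≤ d) (hm : 1 ≤ m) (hN : 1 ≤ N)
    (a b : ℝ) (hab : a < b) (α : ℝ) (hα : 0 < α) (hα1 : α ≤ 1)
    (A : Euc d)
    (f : Euc d → Euc m → ℝ → Euc d)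
    (hf : ContDiff ℝ 2 fun p : Euc d × Euc m × ℝ => f p.1 p.2.1 p.2.2)
    (L : Euc d → Euc m → ℝ → ℝ)
    (hL : ContDiff ℝ 2 fun p : Euc d × Euc m × ℝ => L p.1 p.2.1 p.2.2)
    (M : ℝ) (hM : 0 ≤ M)
    (hLip : ∀ (x₁ x₂ : Euc d) (v : Euc m), ∀ t ∈ Set.Icc a b,
      ‖f x₁ v t - f x₂ v t‖ ≤ M * ‖x₁ - x₂‖)
    (hMsmall : 2 * ((b - a) / (N : ℝ)) ^ α * M < 1)
    -- `SQ V` is the discrete state variable associated to the discrete control `V`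
    (SQ : (ℕ → Euc m) → ℕ → Euc d)
    (hSQ : ∀ V : ℕ → Euc m, SQ V 0 = A ∧ ∀ k, 1 ≤ k → k ≤ N →
      cdMinus α ((b - a) / (N : ℝ)) (SQ V) k
        = f (SQ V k) (V k) (a + (k : ℝ) * ((b - a) / (N : ℝ))))
    (U Ubar : ℕ → Euc m)
    -- `Qbar` is the solution of the linearised discrete fractional Cauchy problem
    (Qbar : ℕ → Euc d) (hQbar0 : Qbar 0 = 0)
    (hQbar : ∀ k, 1 ≤ k → k ≤ N →
      cdMinus α ((b - a) / (N : ℝ)) Qbar k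
        = (fderiv ℝ (fun x => f x (U k) (a + (k : ℝ) * ((b - a) / (N : ℝ)))) (SQ U k)) (Qbar k)
          + (fderiv ℝ (fun v => f (SQ U k) v (a + (k : ℝ) * ((b - a) / (N : ℝ)))) (U k)) (Ubar k)) :
    Filter.Tendsto
      (fun ε : ℝ =>
        ((((b - a) / (N : ℝ)) * ∑ k ∈ Finset.Icc 1 N,
            L (SQ (fun j => U j + ε • Ubar j) k) (U k + ε • Ubar k)
              (a + (k : ℝ) * ((b - a) / (N : ℝ)))) -
          ((b - a) / (N : ℝ)) * ∑ k ∈ Finset.Icc 1 N,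
            L (SQ U k) (U k) (a + (k : ℝ) * ((b - a) / (N : ℝ)))) / ε)
      (𝓝[≠] (0 : ℝ))
      (𝓝 (((b - a) / (N : ℝ)) * ∑ k ∈ Finset.Icc 1 N,
        ((fderiv ℝ (fun x => L x (U k) (a + (k : ℝ) * ((b - a) / (N : ℝ)))) (SQ U k)) (Qbar k)
          + (fderiv ℝ (fun v => L (SQ U k) v (a + (k : ℝ) * ((b - a) / (N : ℝ)))) (U k)) (Ubar k)))) :=
  gateaux_derivative_discrete_cost_general d m N hN a b hab α A f hf L hL M hLip hMsmall SQ hSQ U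
    Ubar Qbar hQbar0 hQbar
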